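/- arXiv:2412.10204 — 3 statements merged into one kernel-verified Lean document; each statement's English description precedes it below -/
import Mathlib

section
/- (Probabilistic lower bound construction.) For all integers t ≥ s ≥ 2 and every real σ < 2 − 1/s − 1/t, there exist arbitrarily large m and bipartite graphs G = (U ⊔ V, E) with |U| = m, |V| = n ≥ m^σ, and |E| ≥ ω(n) (i.e., |E|/n → ∞ as m → ∞), such that G contains no copy of K_{s,t}'. Consequently, the linear threshold of K_{s,t}' is at least 2 − 1/s − 1/t. -/
/-- A bipartite graph (given by its adjacency relation between the parts `U` and `V`)
contains a copy of `K_{s,t}'`, the subdivision of `K_{s,t}`, with all branch vertices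
`u_i, v_j` in `U` and all subdivision vertices `w_{ij}` in `V`. -/
def ContainsKstSub {U V : Type*} (Adj : U → V → Prop) (s t : ℕ) : Prop :=
  ∃ (u : Fin s → U) (v : Fin t → U) (w : Fin s × Fin t → V),
    Function.Injective u ∧ Function.Injective v ∧ Function.Injective w ∧
    (∀ i j, u i ≠ v j) ∧
    ∀ i j, Adj (u i) (w (i, j)) ∧ Adj (v j) (w (i, j))

namespace Stmt5Aux

abbrev Tup (s t m n : ℕ) := (Fin s → Fin m) × (Fin t → Fin m) × (Fin s × Fin t → Fin n)

lemma countZero {γ : Type*} [Fintype γ] [DecidableEq γ] (b : ℕ) [NeZero b] (S : Finset γ) :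
    (Finset.univ.filter fun ω : γ → Fin b => ∀ e ∈ S, ω e = 0).card = b ^ (Sᶜ.card) := by
  rw [← Fintype.card_subtype]
  have e : {ω : γ → Fin b // ∀ a ∈ S, ω a = 0} ≃ ((Sᶜ : Finset γ) → Fin b) :=
    { toFun := fun ω x => ω.1 x
      invFun := fun f => ⟨fun a => if h : a ∈ Sᶜ then f ⟨a, h⟩ else 0, by
        intro a ha
        simp [Finset.mem_compl, ha]⟩
      left_inv := by
        rintro ⟨ω, hω⟩
        apply Subtype.ext
        funext a
        by_cases h : a ∈ Sᶜ
        · simp [h]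
        · simp only [dif_neg h]
          exact (hω a (by simpa using h)).symm
      right_inv := by
        intro f
        funext x
        simp [x.2] }
  rw [Fintype.card_congr e, Fintype.card_fun, Fintype.card_fin, Fintype.card_coe]

def valid {s t m n : ℕ} (T : Tup s t m n) : Prop :=
  Function.Injective T.1 ∧ Function.Injective T.2.1 ∧ Function.Injective T.2.2 ∧
    ∀ i j, T.1 i ≠ T.2.1 j

instance {s t m n : ℕ} : DecidablePred (valid (s := s) (t := t) (m := m) (n := n)) :=
  fun T => by unfold valid; infer_instance

def edgeSet {s t m n : ℕ} (T : Tup s t m n) : Finset (Fin m × Fin n) :=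
  (Finset.univ.image fun p : Fin s × Fin t => (T.1 p.1, T.2.2 p)) ∪
  (Finset.univ.image fun p : Fin s × Fin t => (T.2.1 p.2, T.2.2 p))

lemma card_edgeSet {s t m n : ℕ} {T : Tup s t m n} (hT : valid T) :
    (edgeSet T).card = 2 * (s * t) := by
  obtain ⟨hu, hv, hw, huv⟩ := hT
  have h1 : Function.Injective (fun p : Fin s × Fin t => (T.1 p.1, T.2.2 p)) := by
    intro p q h
    exact hw (congrArg Prod.snd h)
  have h2 : Function.Injective (fun p : Fin s × Fin t => (T.2.1 p.2, T.2.2 p)) := by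
    intro p q h
    exact hw (congrArg Prod.snd h)
  have hdisj : Disjoint (Finset.univ.image fun p : Fin s × Fin t => (T.1 p.1, T.2.2 p))
      (Finset.univ.image fun p : Fin s × Fin t => (T.2.1 p.2, T.2.2 p)) := by
    rw [Finset.disjoint_left]
    rintro x hx1 hx2
    obtain ⟨p, -, hp⟩ := Finset.mem_image.1 hx1
    obtain ⟨q, -, hq⟩ := Finset.mem_image.1 hx2
    rw [← hq] at hp
    have hpq : p = q := hw (congrArg Prod.snd hp)
    subst hpq
    exact huv p.1 p.2 (congrArg Prod.fst hp)
  rw [edgeSet, Finset.card_union_of_disjoint hdisj, Finset.card_image_of_injective _ h1,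
    Finset.card_image_of_injective _ h2, Finset.card_univ, Fintype.card_prod,
    Fintype.card_fin, Fintype.card_fin]
  ring

def E0 {m n b : ℕ} [NeZero b] (ω : Fin m × Fin n → Fin b) : ℕ :=
  (Finset.univ.filter fun e => ω e = 0).card

def Cop (s t : ℕ) {m n b : ℕ} [NeZero b] (ω : Fin m × Fin n → Fin b) : ℕ :=
  (Finset.univ.filter fun T : Tup s t m n => valid T ∧ ∀ e ∈ edgeSet T, ω e = 0).card

lemma core (s t m n b D : ℕ) (hs : 1 ≤ s) (ht : 1 ≤ t) (hb : 1 ≤ b)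
    (hsum : m ^ (s + t) * n ^ (s * t) * b ^ (m * n - 2 * (s * t)) + D * b ^ (m * n)
      ≤ m * n * b ^ (m * n - 1)) :
    ∃ Adj : Fin m → Fin n → Prop, ¬ ContainsKstSub Adj s t ∧
      D ≤ Nat.card {e : Fin m × Fin n // Adj e.1 e.2} := by
  classical
  haveI : NeZero b := ⟨by omega⟩
  have hcardEl : Fintype.card (Fin m × Fin n) = m * n := by
    simp [Fintype.card_prod]
  -- sum of edges
  have hsumE0 : ∑ ω : Fin m × Fin n → Fin b, E0 ω = m * n * b ^ (m * n - 1) := by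
    calc ∑ ω : Fin m × Fin n → Fin b, E0 ω
        = ∑ ω : Fin m × Fin n → Fin b, ∑ e : Fin m × Fin n, (if ω e = 0 then 1 else 0) :=
          Finset.sum_congr rfl fun ω _ => by unfold E0; exact Finset.card_filter _ _
      _ = ∑ e : Fin m × Fin n, ∑ ω : Fin m × Fin n → Fin b, (if ω e = 0 then 1 else 0) :=
          Finset.sum_comm
      _ = ∑ e : Fin m × Fin n,
            (Finset.univ.filter fun ω : Fin m × Fin n → Fin b =>
              ∀ x ∈ ({e} : Finset (Fin m × Fin n)), ω x = 0).card := by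
            refine Finset.sum_congr rfl fun e _ => ?_
            rw [Finset.card_filter]
            refine Finset.sum_congr rfl fun ω _ => ?_
            simp
      _ = ∑ _e : Fin m × Fin n, b ^ (m * n - 1) := by
            refine Finset.sum_congr rfl fun e _ => ?_
            rw [countZero, Finset.card_compl, Finset.card_singleton, hcardEl]
      _ = m * n * b ^ (m * n - 1) := by
            rw [Finset.sum_const, Finset.card_univ, hcardEl, smul_eq_mul]
  -- sum of copies
  have hsumCop : ∑ ω : Fin m × Fin n → Fin b, Cop s t ω
      ≤ m ^ (s + t) * n ^ (s * t) * b ^ (m * n - 2 * (s * t)) := by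
    have hcardTup : Fintype.card (Tup s t m n) = m ^ (s + t) * n ^ (s * t) := by
      simp [Fintype.card_prod, Fintype.card_fun, Fintype.card_fin, pow_add]
      ring
    calc ∑ ω : Fin m × Fin n → Fin b, Cop s t ω
        = ∑ ω : Fin m × Fin n → Fin b, ∑ T : Tup s t m n,
            (if valid T ∧ ∀ e ∈ edgeSet T, ω e = 0 then 1 else 0) :=
          Finset.sum_congr rfl fun ω _ => by unfold Cop; exact Finset.card_filter _ _
      _ = ∑ T : Tup s t m n, ∑ ω : Fin m × Fin n → Fin b,
            (if valid T ∧ ∀ e ∈ edgeSet T, ω e = 0 then 1 else 0) := Finset.sum_comm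
      _ ≤ ∑ _T : Tup s t m n, b ^ (m * n - 2 * (s * t)) := by
          refine Finset.sum_le_sum fun T _ => ?_
          by_cases hT : valid T
          · have heq : ∑ ω : Fin m × Fin n → Fin b,
                (if valid T ∧ ∀ e ∈ edgeSet T, ω e = 0 then 1 else 0)
                = (Finset.univ.filter fun ω : Fin m × Fin n → Fin b =>
                    ∀ e ∈ edgeSet T, ω e = 0).card := by
              rw [Finset.card_filter]
              refine Finset.sum_congr rfl fun ω _ => ?_
              simp [hT]
            rw [heq, countZero, Finset.card_compl, hcardEl, card_edgeSet hT]
          · simp [hT]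
      _ = m ^ (s + t) * n ^ (s * t) * b ^ (m * n - 2 * (s * t)) := by
          rw [Finset.sum_const, Finset.card_univ, hcardTup, smul_eq_mul]
  -- pigeonhole
  have hΩcard : Fintype.card (Fin m × Fin n → Fin b) = b ^ (m * n) := by
    rw [Fintype.card_fun, Fintype.card_fin, hcardEl]
  have hpig : ∃ ω : Fin m × Fin n → Fin b, Cop s t ω + D ≤ E0 ω := by
    have hne : (Finset.univ : Finset (Fin m × Fin n → Fin b)).Nonempty := Finset.univ_nonempty
    have hle : ∑ ω : Fin m × Fin n → Fin b, (Cop s t ω + D)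
        ≤ ∑ ω : Fin m × Fin n → Fin b, E0 ω := by
      rw [Finset.sum_add_distrib, Finset.sum_const, Finset.card_univ, hΩcard, smul_eq_mul,
        hsumE0]
      have hcomm : b ^ (m * n) * D = D * b ^ (m * n) := mul_comm _ _
      rw [hcomm]
      exact le_trans (Nat.add_le_add_right hsumCop _) hsum
    obtain ⟨ω, -, hω⟩ := Finset.exists_le_of_sum_le hne hle
    exact ⟨ω, hω⟩
  obtain ⟨ω, hω⟩ := hpig
  -- construct the graph by deletion
  set Bad : Finset (Tup s t m n) :=
    Finset.univ.filter fun T => valid T ∧ ∀ e ∈ edgeSet T, ω e = 0 with hBad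
  set i0 : Fin s := ⟨0, hs⟩
  set j0 : Fin t := ⟨0, ht⟩
  set del : Finset (Fin m × Fin n) := Bad.image fun T => (T.1 i0, T.2.2 (i0, j0)) with hdel
  refine ⟨fun u v => ω (u, v) = 0 ∧ (u, v) ∉ del, ?_, ?_⟩
  · rintro ⟨u, v, w, hu, hv, hw, huv, hadj⟩
    set T : Tup s t m n := (u, v, w) with hT
    have hTval : valid T := ⟨hu, hv, hw, huv⟩
    have hTzero : ∀ e ∈ edgeSet T, ω e = 0 := by
      intro e he
      rcases Finset.mem_union.1 he with h | h
      · obtain ⟨p, -, hp⟩ := Finset.mem_image.1 h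
        rw [← hp]
        exact (hadj p.1 p.2).1.1
      · obtain ⟨p, -, hp⟩ := Finset.mem_image.1 h
        rw [← hp]
        exact (hadj p.1 p.2).2.1
    have hTBad : T ∈ Bad := by
      rw [hBad, Finset.mem_filter]
      exact ⟨Finset.mem_univ _, hTval, hTzero⟩
    have hmem : (u i0, w (i0, j0)) ∈ del := Finset.mem_image.2 ⟨T, hTBad, rfl⟩
    exact (hadj i0 j0).1.2 hmem
  · have hcount : Nat.card {e : Fin m × Fin n // ω (e.1, e.2) = 0 ∧ (e.1, e.2) ∉ del}
        = ((Finset.univ.filter fun e : Fin m × Fin n => ω e = 0) \ del).card := by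
      rw [Nat.card_eq_fintype_card, Fintype.card_subtype]
      congr 1
      ext e
      simp [Finset.mem_sdiff]
    rw [hcount]
    have hdelcard : del.card ≤ Cop s t ω := by
      rw [hdel]
      refine le_trans Finset.card_image_le (le_of_eq ?_)
      unfold Cop
      rfl
    have h2 : E0 ω - del.card
        ≤ ((Finset.univ.filter fun e : Fin m × Fin n => ω e = 0) \ del).card := by
      unfold E0
      exact Finset.le_card_sdiff del _
    omega

end Stmt5Aux

/-- probabilistic lower bound construction: for `σ < 2 - 1/s - 1/t` there are
arbitrarily large `K_{s,t}'`-free bipartite graphs with `|V| ≥ |U|^σ` and superlinearly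
many edges. -/
theorem stmt5 (s t : ℕ) (hs : 2 ≤ s) (hst : s ≤ t) (σ : ℝ)
    (hσ : σ < 2 - 1 / (s : ℝ) - 1 / (t : ℝ)) (C : ℝ) (m₀ : ℕ) :
    ∃ (m n : ℕ), m₀ ≤ m ∧ (m : ℝ) ^ σ ≤ (n : ℝ) ∧
      ∃ Adj : Fin m → Fin n → Prop, ¬ ContainsKstSub Adj s t ∧
        C * (n : ℝ) ≤ (Nat.card {e : Fin m × Fin n // Adj e.1 e.2} : ℝ) := by
  classical
  have hs1 : 1 ≤ s := by omega
  have ht1 : 1 ≤ t := by omega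
  have ht2 : 2 ≤ t := le_trans hs hst
  have hc1 : 1 ≤ s * t := Nat.one_le_iff_ne_zero.2 (by positivity)
  have hac : s + t ≤ s * t := by nlinarith
  set σ' := max σ 0 with hσ'def
  have hσ'0 : 0 ≤ σ' := le_max_right _ _
  set K₀ := ⌈max C 1⌉₊ with hK₀def
  set K := K₀ + 1 with hKdef
  have hK₀C : C ≤ (K₀ : ℝ) := le_trans (le_max_left _ _) (Nat.le_ceil _)
  have hK₀1 : 1 ≤ K₀ := Nat.one_le_ceil_iff.2 (by
    have : (1:ℝ) ≤ max C 1 := le_max_right _ _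
    linarith)
  have hK1 : 1 ≤ K := by omega
  set β := ((s + t : ℕ) : ℝ) + σ' * (((s * t : ℕ) : ℝ) - 1) with hβdef
  set ε := 2 * ((s * t : ℕ) : ℝ) - β with hεdef
  have hsR : (0:ℝ) < s := by exact_mod_cast (by omega : 0 < s)
  have htR : (0:ℝ) < t := by exact_mod_cast (by omega : 0 < t)
  have hcR1 : (1:ℝ) ≤ ((s * t : ℕ) : ℝ) := by exact_mod_cast hc1
  have hacR : ((s + t : ℕ) : ℝ) ≤ ((s * t : ℕ) : ℝ) := by exact_mod_cast hac
  have hε0 : 0 < ε := by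
    have h1 : σ * ((s:ℝ) * t) < (2 - 1/(s:ℝ) - 1/(t:ℝ)) * ((s:ℝ) * t) :=
      mul_lt_mul_of_pos_right hσ (by positivity)
    have h2 : (2 - 1/(s:ℝ) - 1/(t:ℝ)) * ((s:ℝ) * t) = 2 * ((s:ℝ) * t) - s - t := by
      field_simp
      ring
    have hkey : σ * ((s:ℝ) * t) < 2 * ((s:ℝ) * t) - s - t := by linarith
    rcases le_or_gt σ 0 with h | h
    · have hmax : σ' = 0 := max_eq_right h
      rw [hεdef, hβdef, hmax]
      simp only [zero_mul, add_zero]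
      linarith
    · have hmax : σ' = σ := max_eq_left h.le
      rw [hεdef, hβdef, hmax]
      push_cast
      linarith
  set A := 2 ^ (s * t - 1) * (K : ℝ) ^ β with hAdef
  have hKR0 : (0:ℝ) < K := by exact_mod_cast (by omega : 0 < K)
  have hA0 : 0 < A := by
    rw [hAdef]
    positivity
  set x₀ := max 1 (A ^ (1/ε)) with hx₀def
  set b := max m₀ (max (s * t) (max 1 ⌈x₀⌉₊)) with hbdef
  have hb_m₀ : m₀ ≤ b := le_max_left _ _
  have hb_st : s * t ≤ b := le_trans (le_max_left _ _) (le_max_right _ _)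
  have hb_1 : 1 ≤ b := le_trans (le_max_left 1 _) (le_trans (le_max_right _ _) (le_max_right _ _))
  have hb_x₀ : ⌈x₀⌉₊ ≤ b :=
    le_trans (le_max_right 1 _) (le_trans (le_max_right _ _) (le_max_right _ _))
  have hbR0 : (0:ℝ) < b := by exact_mod_cast (by omega : 0 < b)
  have hbx : x₀ ≤ (b:ℝ) := le_trans (Nat.le_ceil _) (by exact_mod_cast hb_x₀)
  have hbA : A ≤ (b:ℝ) ^ ε := by
    have h1 : A ^ (1/ε) ≤ (b:ℝ) := le_trans (le_max_right 1 _) hbx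
    have h2 : (A ^ (1/ε)) ^ ε ≤ (b:ℝ) ^ ε := Real.rpow_le_rpow (by positivity) h1 hε0.le
    rwa [← Real.rpow_mul hA0.le, one_div, inv_mul_cancel₀ hε0.ne', Real.rpow_one] at h2
  set m := K * b with hmdef
  have hm1 : 1 ≤ m := Nat.one_le_iff_ne_zero.2 (by positivity)
  have hmR1 : (1:ℝ) ≤ m := by exact_mod_cast hm1
  have hmR0 : (0:ℝ) < m := by linarith
  set n := ⌈(m:ℝ) ^ σ'⌉₊ with hndef
  have hrp0 : (0:ℝ) < (m:ℝ) ^ σ' := Real.rpow_pos_of_pos hmR0 _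
  have hn1 : 1 ≤ n := Nat.one_le_ceil_iff.2 hrp0
  have hσn : (m:ℝ) ^ σ ≤ (n:ℝ) :=
    le_trans (Real.rpow_le_rpow_of_exponent_le hmR1 (le_max_left _ _)) (Nat.le_ceil _)
  have hrp1 : (1:ℝ) ≤ (m:ℝ) ^ σ' := Real.one_le_rpow hmR1 hσ'0
  have hn2 : (n:ℝ) ≤ 2 * (m:ℝ) ^ σ' := by
    have h := Nat.ceil_lt_add_one hrp0.le
    rw [hndef]
    push_cast
    linarith
  have hnR0 : (0:ℝ) ≤ (n:ℝ) := Nat.cast_nonneg n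
  -- the key numeric inequality
  have hkeyN : m ^ (s + t) * n ^ (s * t) ≤ n * b ^ (2 * (s * t)) := by
    rw [← Nat.cast_le (α := ℝ)]
    push_cast
    have step1 : (n:ℝ) ^ (s * t) = (n:ℝ) ^ (s * t - 1) * n := by
      rw [← pow_succ]
      congr 1
      omega
    have step2 : (n:ℝ) ^ (s * t - 1) ≤ (2 * (m:ℝ) ^ σ') ^ (s * t - 1) :=
      pow_le_pow_left₀ hnR0 hn2 _
    have middle : (m:ℝ) ^ (s + t) * (2 * (m:ℝ) ^ σ') ^ (s * t - 1) = A * (b:ℝ) ^ β := by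
      rw [mul_pow]
      rw [← Real.rpow_natCast ((m:ℝ) ^ σ') (s * t - 1), ← Real.rpow_mul hmR0.le]
      rw [← Real.rpow_natCast (m:ℝ) (s + t)]
      rw [mul_left_comm, ← Real.rpow_add hmR0]
      have hexp : ((s + t : ℕ) : ℝ) + σ' * ((s * t - 1 : ℕ) : ℝ) = β := by
        rw [hβdef, Nat.cast_sub hc1, Nat.cast_one]
      rw [hexp]
      have hsplit : (m:ℝ) ^ β = (K:ℝ) ^ β * (b:ℝ) ^ β := by
        rw [hmdef, Nat.cast_mul, Real.mul_rpow hKR0.le hbR0.le]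
      rw [hsplit, hAdef]
      ring
    have step8 : (b:ℝ) ^ (2 * (s * t)) = (b:ℝ) ^ ε * (b:ℝ) ^ β := by
      rw [← Real.rpow_natCast (b:ℝ) (2 * (s * t)), ← Real.rpow_add hbR0]
      congr 1
      rw [hεdef]
      push_cast
      ring
    calc (m:ℝ) ^ (s + t) * (n:ℝ) ^ (s * t)
        = (n:ℝ) * ((m:ℝ) ^ (s + t) * (n:ℝ) ^ (s * t - 1)) := by rw [step1]; ring
      _ ≤ (n:ℝ) * ((m:ℝ) ^ (s + t) * (2 * (m:ℝ) ^ σ') ^ (s * t - 1)) := by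
          apply mul_le_mul_of_nonneg_left _ hnR0
          apply mul_le_mul_of_nonneg_left step2 (by positivity)
      _ = (n:ℝ) * (A * (b:ℝ) ^ β) := by rw [middle]
      _ ≤ (n:ℝ) * ((b:ℝ) ^ ε * (b:ℝ) ^ β) := by
          apply mul_le_mul_of_nonneg_left _ hnR0
          exact mul_le_mul_of_nonneg_right hbA (by positivity)
      _ = (n:ℝ) * (b:ℝ) ^ (2 * (s * t)) := by rw [step8]
  -- the hypothesis of `core`
  have hmn1 : 1 ≤ m * n := Nat.one_le_iff_ne_zero.2 (by positivity)
  have hmn2st : 2 * (s * t) ≤ m * n := by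
    calc 2 * (s * t) ≤ 2 * b := by omega
      _ ≤ (K * b) * 1 := by nlinarith
      _ ≤ m * n := by rw [hmdef] at *; exact Nat.mul_le_mul le_rfl hn1
  have hsum : m ^ (s + t) * n ^ (s * t) * b ^ (m * n - 2 * (s * t)) + (K₀ * n) * b ^ (m * n)
      ≤ m * n * b ^ (m * n - 1) := by
    have e1 : b ^ (2 * (s * t)) * b ^ (m * n - 2 * (s * t)) = b ^ (m * n) := by
      rw [← pow_add]
      congr 1
      omega
    have e2 : b * b ^ (m * n - 1) = b ^ (m * n) := by
      rw [← pow_succ']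
      congr 1
      omega
    calc m ^ (s + t) * n ^ (s * t) * b ^ (m * n - 2 * (s * t)) + (K₀ * n) * b ^ (m * n)
        ≤ n * b ^ (2 * (s * t)) * b ^ (m * n - 2 * (s * t)) + (K₀ * n) * b ^ (m * n) :=
          Nat.add_le_add_right (Nat.mul_le_mul_right _ hkeyN) _
      _ = n * b ^ (m * n) + (K₀ * n) * b ^ (m * n) := by rw [mul_assoc, e1]
      _ = K * (n * b ^ (m * n)) := by rw [hKdef]; ring
      _ = m * n * b ^ (m * n - 1) := by rw [hmdef, ← e2]; ring
  obtain ⟨Adj, hfree, hcard⟩ := Stmt5Aux.core s t m n b (K₀ * n) hs1 ht1 hb_1 hsum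
  refine ⟨m, n, ?_, hσn, Adj, hfree, ?_⟩
  · calc m₀ ≤ b := hb_m₀
      _ ≤ K * b := Nat.le_mul_of_pos_left b (by omega)
  · calc C * (n:ℝ) ≤ (K₀:ℝ) * n := mul_le_mul_of_nonneg_right hK₀C hnR0
      _ = ((K₀ * n : ℕ) : ℝ) := by push_cast; ring
      _ ≤ (Nat.card {e : Fin m × Fin n // Adj e.1 e.2} : ℝ) := by exact_mod_cast hcard
end

section
/- If real numbers m, n ≥ 1 satisfy n < m^σ with σ > 1 and e ≥ 2 is an integer, then m^{(e−2)σ/((e−1)σ−1)} · n^{(e−1)(σ−1)/((e−1)σ−1)} ≤ m^{(e−1)σ/(eσ−1)} · n^{e(σ−1)/(eσ−1)}. -/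
/-- monotonicity-in-dimension of the main incidence term. -/
theorem stmt10 (e : ℕ) (he : 2 ≤ e) (σ m n : ℝ) (hσ : 1 < σ)
    (hm : 1 ≤ m) (hn : 1 ≤ n) (hnm : n < m ^ σ) :
    m ^ (((e : ℝ) - 2) * σ / (((e : ℝ) - 1) * σ - 1)) *
        n ^ (((e : ℝ) - 1) * (σ - 1) / (((e : ℝ) - 1) * σ - 1)) ≤
      m ^ (((e : ℝ) - 1) * σ / ((e : ℝ) * σ - 1)) *
        n ^ ((e : ℝ) * (σ - 1) / ((e : ℝ) * σ - 1)) := by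
  have hm0 : (0:ℝ) < m := lt_of_lt_of_le one_pos hm
  have hn0 : (0:ℝ) < n := lt_of_lt_of_le one_pos hn
  have hE : (2:ℝ) ≤ (e:ℝ) := by exact_mod_cast he
  set E := (e:ℝ) with hEdef
  set L := Real.log m with hLdef
  set N := Real.log n with hNdef
  have hL : 0 ≤ L := Real.log_nonneg hm
  have hN : 0 ≤ N := Real.log_nonneg hn
  have hNL : N ≤ σ * L := by
    have h1 : Real.log n ≤ Real.log (m ^ σ) :=
      Real.log_le_log (by positivity) hnm.le
    rwa [Real.log_rpow hm0] at h1
  have hA : (0:ℝ) < (E - 1) * σ - 1 := by nlinarith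
  have hB : (0:ℝ) < E * σ - 1 := by nlinarith
  rw [Real.rpow_def_of_pos hm0, Real.rpow_def_of_pos hn0,
    Real.rpow_def_of_pos hm0, Real.rpow_def_of_pos hn0,
    ← Real.exp_add, ← Real.exp_add, Real.exp_le_exp,
    ← hLdef, ← hNdef]
  have goal2 : (L * ((E - 2) * σ) + N * ((E - 1) * (σ - 1))) / ((E - 1) * σ - 1) ≤
      (L * ((E - 1) * σ) + N * (E * (σ - 1))) / (E * σ - 1) := by
    rw [div_le_div_iff₀ hA hB]
    nlinarith [mul_nonneg (by linarith : (0:ℝ) ≤ σ - 1) (by linarith : 0 ≤ σ * L - N)]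
  calc L * ((E - 2) * σ / ((E - 1) * σ - 1)) + N * ((E - 1) * (σ - 1) / ((E - 1) * σ - 1))
      = (L * ((E - 2) * σ) + N * ((E - 1) * (σ - 1))) / ((E - 1) * σ - 1) := by ring
    _ ≤ (L * ((E - 1) * σ) + N * (E * (σ - 1))) / (E * σ - 1) := goal2
    _ = L * ((E - 1) * σ / (E * σ - 1)) + N * (E * (σ - 1) / (E * σ - 1)) := by ring
end

section
/- Let G be a bipartite graph with parts U, V, let x₁, …, x_s ∈ U be distinct vertices such that |N(x_i) ∩ N(x_j)| ≤ B for all i < j, and let A ⊆ U \ {x₁,…,x_s} be a set such that for every u ∈ A there exist distinct v₁,…,v_s ∈ V with v_i ∈ N(x_i) ∩ N(u). Suppose G contains no copy of K_{s,t}' with branch vertices x₁,…,x_s on the s-side. Then |A| ≤ t + s·t·Δ(V), where Δ(V) is the maximum degree of vertices in V. -/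
/-- the final counting step: if `G` has no copy of `K_{s,t}'` rooted at the
branch vertices `x₁,…,x_s`, then `|A| ≤ t + s·t·Δ(V)`. -/
theorem stmt18 {U V : Type*} [Fintype U] [Fintype V] (Adj : U → V → Prop)
    (s t B : ℕ) (hs : 1 ≤ s) (ht : 1 ≤ t)
    (x : Fin s → U) (hx : Function.Injective x)
    (hcodeg : ∀ i j : Fin s, i ≠ j → Nat.card {v : V // Adj (x i) v ∧ Adj (x j) v} ≤ B)
    (A : Finset U) (hAx : ∀ i, x i ∉ A)
    (hAnbr : ∀ u ∈ A, ∃ v : Fin s → V, Function.Injective v ∧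
      ∀ i, Adj (x i) (v i) ∧ Adj u (v i))
    (hfree : ¬ ∃ (u : Fin t → U) (w : Fin s × Fin t → V),
      Function.Injective u ∧ Function.Injective w ∧ (∀ j i, u j ≠ x i) ∧
      ∀ i j, Adj (x i) (w (i, j)) ∧ Adj (u j) (w (i, j))) :
    A.card ≤ t + s * t * (Finset.univ.sup fun v : V => Nat.card {u : U // Adj u v}) := by
  classical
  set Δ := (Finset.univ.sup fun v : V => Nat.card {u : U // Adj u v}) with hΔ
  set P : ℕ → Prop := fun n => ∃ (u : Fin n → U) (w : Fin s × Fin n → V),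
      Function.Injective u ∧ Function.Injective w ∧ (∀ j, u j ∈ A) ∧
      ∀ i j, Adj (x i) (w (i, j)) ∧ Adj (u j) (w (i, j)) with hP
  have P0 : P 0 := by
    refine ⟨Fin.elim0, fun p => p.2.elim0, ?_, ?_, ?_, ?_⟩
    · intro a; exact a.elim0
    · intro a; exact a.2.elim0
    · intro j; exact j.elim0
    · intro i j; exact j.elim0
  have Pmono : ∀ m n : ℕ, m ≤ n → P n → P m := by
    rintro m n hmn ⟨u, w, hu, hw, huA, hadj⟩
    refine ⟨fun j => u (Fin.castLE hmn j), fun p => w (p.1, Fin.castLE hmn p.2),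
      ?_, ?_, fun j => huA _, fun i j => hadj i _⟩
    · intro a b hab
      exact Fin.castLE_injective hmn (hu hab)
    · rintro ⟨i, j⟩ ⟨i', j'⟩ hab
      have := hw hab
      have h1 : i = i' := congrArg Prod.fst this
      have h2 : Fin.castLE hmn j = Fin.castLE hmn j' := congrArg Prod.snd this
      exact Prod.ext h1 (Fin.castLE_injective hmn h2)
  have hPt : ¬ P t := by
    rintro ⟨u, w, hu, hw, huA, hadj⟩
    exact hfree ⟨u, w, hu, hw, fun j i heq => hAx i (heq ▸ huA j), hadj⟩
  set r := Nat.findGreatest P t with hr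
  have hPr : P r := Nat.findGreatest_spec (Nat.zero_le t) P0
  have hrt : r ≤ t := Nat.findGreatest_le t
  have hrlt : r < t := lt_of_le_of_ne hrt (fun h => hPt (h ▸ hPr))
  have hnot : ¬ P (r + 1) :=
    Nat.findGreatest_is_greatest (Nat.lt_succ_self r) hrlt
  obtain ⟨u, w, hu, hw, huA, hadj⟩ := hPr
  -- key claim
  have key : ∀ a ∈ A, (∃ j, a = u j) ∨ ∃ p, Adj a (w p) := by
    intro a ha
    by_contra hcon
    push_neg at hcon
    obtain ⟨h1, h2⟩ := hcon
    obtain ⟨v, hv, hvadj⟩ := hAnbr a ha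
    have hdisj : ∀ i p, v i ≠ w p := by
      intro i p heq
      exact h2 p (heq ▸ (hvadj i).2)
    apply hnot
    refine ⟨Fin.snoc u a, fun p => Fin.snoc (α := fun _ => V) (fun j => w (p.1, j)) (v p.1) p.2,
      ?_, ?_, ?_, ?_⟩
    · intro b c hbc
      induction b using Fin.lastCases with
      | last =>
        induction c using Fin.lastCases with
        | last => rfl
        | cast c =>
          simp only [Fin.snoc_last, Fin.snoc_castSucc] at hbc
          exact absurd hbc (h1 c)
      | cast b =>
        induction c using Fin.lastCases with
        | last =>
          simp only [Fin.snoc_last, Fin.snoc_castSucc] at hbc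
          exact absurd hbc.symm (h1 b)
        | cast c =>
          simp only [Fin.snoc_castSucc] at hbc
          exact congrArg Fin.castSucc (hu hbc)
    · rintro ⟨i, j⟩ ⟨i', j'⟩ hpq
      induction j using Fin.lastCases with
      | last =>
        induction j' using Fin.lastCases with
        | last =>
          simp only [Fin.snoc_last] at hpq
          rw [hv hpq]
        | cast j' =>
          simp only [Fin.snoc_last, Fin.snoc_castSucc] at hpq
          exact absurd hpq (hdisj i (i', j'))
      | cast j =>
        induction j' using Fin.lastCases with
        | last =>
          simp only [Fin.snoc_last, Fin.snoc_castSucc] at hpq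
          exact absurd hpq.symm (hdisj i' (i, j))
        | cast j' =>
          simp only [Fin.snoc_castSucc] at hpq
          have := hw hpq
          have h1' : i = i' := congrArg Prod.fst this
          have h2' : j = j' := congrArg Prod.snd this
          simp [h1', h2']
    · intro j
      induction j using Fin.lastCases with
      | last => simpa using ha
      | cast j => simpa using huA j
    · intro i j
      induction j using Fin.lastCases with
      | last => simpa using ⟨(hvadj i).1, (hvadj i).2⟩
      | cast j => simpa using hadj i j
  -- counting
  have hsub : A ⊆ (Finset.univ.image u) ∪
      Finset.univ.biUnion (fun p : Fin s × Fin r => Finset.univ.filter (fun b => Adj b (w p))) := by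
    intro a ha
    rcases key a ha with ⟨j, hj⟩ | ⟨p, hp⟩
    · exact Finset.mem_union_left _ (Finset.mem_image.2 ⟨j, Finset.mem_univ j, hj.symm⟩)
    · exact Finset.mem_union_right _ (Finset.mem_biUnion.2 ⟨p, Finset.mem_univ p,
        Finset.mem_filter.2 ⟨Finset.mem_univ a, hp⟩⟩)
  have hfiltΔ : ∀ p : Fin s × Fin r, (Finset.univ.filter (fun b => Adj b (w p))).card ≤ Δ := by
    intro p
    have : (Finset.univ.filter (fun b => Adj b (w p))).card
        = Nat.card {u : U // Adj u (w p)} := by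
      rw [Nat.card_eq_fintype_card, Fintype.card_subtype]
    rw [this, hΔ]
    exact Finset.le_sup (f := fun v : V => Nat.card {u : U // Adj u v}) (Finset.mem_univ (w p))
  calc A.card ≤ ((Finset.univ.image u) ∪
      Finset.univ.biUnion (fun p : Fin s × Fin r =>
        Finset.univ.filter (fun b => Adj b (w p)))).card := Finset.card_le_card hsub
    _ ≤ (Finset.univ.image u).card +
        (Finset.univ.biUnion (fun p : Fin s × Fin r =>
          Finset.univ.filter (fun b => Adj b (w p)))).card := Finset.card_union_le _ _
    _ ≤ r + s * r * Δ := by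
        gcongr
        · calc (Finset.univ.image u).card ≤ (Finset.univ : Finset (Fin r)).card :=
              Finset.card_image_le
            _ = r := by simp
        · calc (Finset.univ.biUnion (fun p : Fin s × Fin r =>
              Finset.univ.filter (fun b => Adj b (w p)))).card
              ≤ ∑ p : Fin s × Fin r, (Finset.univ.filter (fun b => Adj b (w p))).card :=
                Finset.card_biUnion_le
            _ ≤ ∑ _p : Fin s × Fin r, Δ := Finset.sum_le_sum (fun p _ => hfiltΔ p)
            _ = s * r * Δ := by simp [Finset.sum_const, mul_comm]
    _ ≤ t + s * t * Δ := by
        have : s * r ≤ s * t := Nat.mul_le_mul_left s hrt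
        exact Nat.add_le_add hrt (Nat.mul_le_mul_right Δ this)
end
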